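/- Let Ω ∈ ℝ^{ℓ×n} have unit first m columns (‖Ωe_j‖ = 1 for j ≤ m). For j ∈ {1,…,m}, define Ψ_j = diag(I_{j−1}, Ω_{j:n}) ∈ ℝ^{(ℓ+j−1)×n} and the modified reflectors H(u_j, Ω, j) = P(u_j, Ψ_j) for vectors u_j whose first j−1 entries vanish. Set β_j = 2/‖Ωu_j‖² and define T_j recursively by T₁ = [β₁], T_{j+1} = [[T_j, −β_j T_j (ΩU_j)ᵀ Ωu_{j+1}],[0, β_j]]. Then for all 1 ≤ j ≤ m, H(u₁,Ω,1)⋯H(u_j,Ω,j) = I − U_j T_j ut((ΩU_j)ᵀΩ), where ut denotes the upper-triangular part (here of a j×n matrix, zeroing entries (i,k) with k < i). -/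

import Mathlib

open Matrix

/-- Euclidean norm of a finitely supported real vector. -/
noncomputable def eucNorm {k : Type*} [Fintype k] (v : k → ℝ) : ℝ := Real.sqrt (v ⬝ᵥ v)

/-- The matrix `U_j = [u₁ | ⋯ | u_j]` whose columns are the (first `j`) Householder
vectors. -/
def Umat {n : ℕ} (u : ℕ → Fin n → ℝ) (j : ℕ) : Matrix (Fin n) (Fin j) ℝ :=
  Matrix.of fun i a => u a i

/-- `[0_{ℓ×j} Ω_{j+1:n}]`: the matrix `Ω` with its first `j` columns zeroed out. -/
def maskMat {l n : ℕ} (Ω : Matrix (Fin l) (Fin n) ℝ) (j : ℕ) : Matrix (Fin l) (Fin n) ℝ :=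
  Matrix.of fun r c => if (c : ℕ) < j then 0 else Ω r c

/-- Upper-triangular part of a rectangular matrix: entries `(i,k)` with `k < i`
are zeroed out. -/
def utR {j n : ℕ} (A : Matrix (Fin j) (Fin n) ℝ) : Matrix (Fin j) (Fin n) ℝ :=
  Matrix.of fun i k => if (k : ℕ) < (i : ℕ) then 0 else A i k

/-- The modified randomized Householder reflector
`H(u_j, Ω, j) = P(u_j, Ψ_j) = I - (2/‖Ωu_j‖²) u_j (Ωu_j)ᵀ [0_{ℓ×(j-1)} Ω_{j:n}]`
(zero-based index `j`), valid when the first `j` coordinates of `u_j` vanish. -/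
noncomputable def Hrefl {l n : ℕ} (Ω : Matrix (Fin l) (Fin n) ℝ) (u : ℕ → Fin n → ℝ)
    (j : ℕ) : Matrix (Fin n) (Fin n) ℝ :=
  1 - (2 / ((Ω.mulVec (u j)) ⬝ᵥ (Ω.mulVec (u j)))) •
    (Matrix.vecMulVec (u j) (Ω.mulVec (u j)) * maskMat Ω j)

/-- The upper-triangular compact-form factor `T_j` for the modified reflectors,
defined by the recursion `T₁ = [β₁]`,
`T_{j+1} = [[T_j, -β T_j (ΩU_j)ᵀ Ωu_{j+1}], [0, β]]` with `β = 2/‖Ωu_{j+1}‖²`. -/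
noncomputable def Tmat {l n : ℕ} (Ω : Matrix (Fin l) (Fin n) ℝ) (u : ℕ → Fin n → ℝ) :
    (j : ℕ) → Matrix (Fin j) (Fin j) ℝ
  | 0 => 0
  | j + 1 =>
    Matrix.reindex finSumFinEquiv finSumFinEquiv
      (Matrix.fromBlocks (Tmat Ω u j)
        (Matrix.of fun i (_ : Fin 1) =>
          ((-(2 / ((Ω.mulVec (u j)) ⬝ᵥ (Ω.mulVec (u j))))) •
              ((Tmat Ω u j).mulVec fun a : Fin j =>
                (Ω.mulVec (u a)) ⬝ᵥ (Ω.mulVec (u j)))) i)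
        0
        (Matrix.of fun _ _ => 2 / ((Ω.mulVec (u j)) ⬝ᵥ (Ω.mulVec (u j)))))

/-!
Write `H(u_j, Ω, j) = I - β_j u_j r_jᵀ` with `r_jᵀ = (Ωu_j)ᵀ [0 Ω_{j:n}]`; this `r_jᵀ` is exactly
the row that `ut((ΩU_{j+1})ᵀΩ)` adds below `ut((ΩU_j)ᵀΩ)`. Multiplying the compact form for `j`
on the right by `H(u_j, Ω, j)` produces the correction `β_j (u_j - U_j T_j ut((ΩU_j)ᵀΩ) u_j) r_jᵀ`,
and since the first `j` coordinates of `u_j` vanish, `ut((ΩU_j)ᵀΩ) u_j = (ΩU_j)ᵀ Ωu_j`, which is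
how the last column `-β_j T_j (ΩU_j)ᵀ Ωu_j` of `T_{j+1}` arises; expanding the bordered block forms
of `U_{j+1}`, `T_{j+1}` and the triangular factor gives the compact form for `j + 1`.
-/

/-- The coercion `Fin j → ℕ` in `(List.finRange j).map fun a => Hrefl Ω u a` is elaborated as a
bind in the list monad. -/
lemma List.finRange_bind_val (j : ℕ) :
    (do let a ← List.finRange j; pure (a : ℕ) : List ℕ) = List.range j :=
  (List.flatMap_pure_eq_map _ _).trans List.map_coe_finRange_eq_range

lemma Matrix.one_sub_mul_one_sub_smul_vecMulVec {ι R : Type*} [Fintype ι] [DecidableEq ι]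
    [CommRing R] (A : Matrix ι ι R) (c : R) (x y : ι → R) :
    (1 - A) * (1 - c • vecMulVec x y) = 1 - (A + c • vecMulVec (x - A *ᵥ x) y) := by
  rw [sub_vecMulVec, ← mul_vecMulVec]
  simp only [mul_sub, sub_mul, mul_one, one_mul, mul_smul_comm, smul_sub]
  abel

lemma Matrix.submatrix_fromCols_mul_fromBlocks_mul_fromRows {ι R : Type*} [Fintype ι] [CommRing R]
    {j : ℕ} (U : Matrix ι (Fin j) R) (x : ι → R) (T : Matrix (Fin j) (Fin j) R) (t : Fin j → R)
    (b : R) (M : Matrix (Fin j) ι R) (r : ι → R) :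
    (fromCols U (replicateCol (Fin 1) x)).submatrix id finSumFinEquiv.symm *
        (fromBlocks T (replicateCol (Fin 1) t) 0 (of fun _ _ : Fin 1 => b)).submatrix
          finSumFinEquiv.symm finSumFinEquiv.symm *
        (fromRows M (replicateRow (Fin 1) r)).submatrix finSumFinEquiv.symm id =
      U * T * M + vecMulVec (U *ᵥ t + b • x) r := by
  rw [submatrix_mul_equiv, submatrix_mul_equiv, submatrix_id_id,
    fromCols_mul_fromBlocks, fromCols_mul_fromRows, Matrix.mul_zero, add_zero,
    ← replicateCol_mulVec]
  congr 1
  ext i k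
  simp [mul_apply, vecMulVec_apply]
  ring

section

variable {l n : ℕ}

lemma utR_mulVec_of_forall_lt_eq_zero {j : ℕ} (M : Matrix (Fin j) (Fin n) ℝ) {v : Fin n → ℝ}
    (hv : ∀ c : Fin n, (c : ℕ) < j → v c = 0) : utR M *ᵥ v = M *ᵥ v := by
  funext a
  simp only [mulVec, dotProduct]
  refine Finset.sum_congr rfl fun c _ => ?_
  by_cases h : (c : ℕ) < a
  · simp [utR, h, hv c (h.trans a.isLt)]
  · simp [utR, h]

lemma Umat_succ (u : ℕ → Fin n → ℝ) (j : ℕ) :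
    Umat u (j + 1) =
      (fromCols (Umat u j) (replicateCol (Fin 1) (u j))).submatrix id finSumFinEquiv.symm := by
  ext i a
  refine Fin.lastCases ?_ (fun a => ?_) a
  · simp [Umat, finSumFinEquiv_symm_last]
  · simp [Umat, finSumFinEquiv_symm_apply_castSucc]

lemma utR_transpose_mul_succ (Ω : Matrix (Fin l) (Fin n) ℝ) (u : ℕ → Fin n → ℝ) (j : ℕ) :
    utR ((Ω * Umat u (j + 1))ᵀ * Ω) =
      (fromRows (utR ((Ω * Umat u j)ᵀ * Ω))
        (replicateRow (Fin 1) ((Ω *ᵥ u j) ᵥ* maskMat Ω j))).submatrix finSumFinEquiv.symm id := by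
  ext i c
  refine Fin.lastCases ?_ (fun a => ?_) i
  · by_cases h : (c : ℕ) < j
    · simp [utR, h, finSumFinEquiv_symm_last, vecMul, dotProduct, maskMat]
    · simp [utR, h, finSumFinEquiv_symm_last, vecMul, dotProduct, maskMat, mul_apply, Umat, mulVec,
        mul_comm]
  · simp [utR, finSumFinEquiv_symm_apply_castSucc, mul_apply, Umat]

lemma Tmat_succ (Ω : Matrix (Fin l) (Fin n) ℝ) (u : ℕ → Fin n → ℝ) (j : ℕ) :
    Tmat Ω u (j + 1) =
      (fromBlocks (Tmat Ω u j)
        (replicateCol (Fin 1) ((-(2 / ((Ω *ᵥ u j) ⬝ᵥ (Ω *ᵥ u j)))) •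
          Tmat Ω u j *ᵥ ((Ω * Umat u j)ᵀ *ᵥ (Ω *ᵥ u j))))
        0 (of fun _ _ => 2 / ((Ω *ᵥ u j) ⬝ᵥ (Ω *ᵥ u j)))).submatrix
        finSumFinEquiv.symm finSumFinEquiv.symm :=
  rfl

lemma Umat_mul_Tmat_mul_utR_succ (Ω : Matrix (Fin l) (Fin n) ℝ) (u : ℕ → Fin n → ℝ) (j : ℕ) :
    Umat u (j + 1) * Tmat Ω u (j + 1) * utR ((Ω * Umat u (j + 1))ᵀ * Ω) =
      Umat u j * Tmat Ω u j * utR ((Ω * Umat u j)ᵀ * Ω) +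
        (2 / ((Ω *ᵥ u j) ⬝ᵥ (Ω *ᵥ u j))) •
          vecMulVec (u j - Umat u j *ᵥ (Tmat Ω u j *ᵥ ((Ω * Umat u j)ᵀ *ᵥ (Ω *ᵥ u j))))
            ((Ω *ᵥ u j) ᵥ* maskMat Ω j) := by
  rw [utR_transpose_mul_succ, Umat_succ, Tmat_succ,
    submatrix_fromCols_mul_fromBlocks_mul_fromRows, ← smul_vecMulVec, mulVec_smul, smul_sub,
    neg_smul, neg_add_eq_sub]

lemma Umat_mul_Tmat_mul_utR_mulVec (Ω : Matrix (Fin l) (Fin n) ℝ) (u : ℕ → Fin n → ℝ) (j : ℕ)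
    (hu : ∀ i : Fin n, (i : ℕ) < j → u j i = 0) :
    (Umat u j * Tmat Ω u j * utR ((Ω * Umat u j)ᵀ * Ω)) *ᵥ u j =
      Umat u j *ᵥ (Tmat Ω u j *ᵥ ((Ω * Umat u j)ᵀ *ᵥ (Ω *ᵥ u j))) := by
  rw [← mulVec_mulVec, ← mulVec_mulVec, utR_mulVec_of_forall_lt_eq_zero _ hu,
    ← mulVec_mulVec (M := (Ω * Umat u j)ᵀ)]

lemma prod_map_Hrefl_range (Ω : Matrix (Fin l) (Fin n) ℝ) (u : ℕ → Fin n → ℝ)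
    (hu : ∀ j, ∀ i : Fin n, (i : ℕ) < j → u j i = 0) (j : ℕ) :
    ((List.range j).map (Hrefl Ω u)).prod =
      1 - Umat u j * Tmat Ω u j * utR ((Ω * Umat u j)ᵀ * Ω) := by
  induction j with
  | zero => simp
  | succ j ih =>
    rw [List.range_succ, List.map_append, List.prod_append, ih, List.map_singleton,
      List.prod_singleton, Hrefl, vecMulVec_mul, one_sub_mul_one_sub_smul_vecMulVec,
      Umat_mul_Tmat_mul_utR_mulVec Ω u j (hu j), Umat_mul_Tmat_mul_utR_succ]

end

theorem trim_rhqr_compact_general {l n : ℕ} (m : ℕ) (Ω : Matrix (Fin l) (Fin n) ℝ)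
    (u : ℕ → Fin n → ℝ)
    (hu0 : ∀ j, ∀ i : Fin n, (i : ℕ) < j → u j i = 0) :
    ∀ j ≤ m,
      ((List.finRange j).map fun a => Hrefl Ω u a).prod =
        1 - Umat u j * Tmat Ω u j * utR ((Ω * Umat u j)ᵀ * Ω) := by
  intro j _
  rw [List.finRange_bind_val]
  exact prod_map_Hrefl_range Ω u hu0 j

/-- compact form of the composition of modified randomized Householder
reflectors: for all `1 ≤ j ≤ m`,
`H(u₁,Ω,1)⋯H(u_j,Ω,j) = I - U_j T_j ut((ΩU_j)ᵀΩ)`. -/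
theorem trim_rhqr_compact {l n : ℕ} (m : ℕ) (Ω : Matrix (Fin l) (Fin n) ℝ)
    (hunit : ∀ c : Fin n, (c : ℕ) < m → eucNorm (Ω.mulVec (Pi.single c 1)) = 1)
    (u : ℕ → Fin n → ℝ)
    (hu0 : ∀ j, ∀ i : Fin n, (i : ℕ) < j → u j i = 0)
    (huΩ : ∀ j < m, Ω.mulVec (u j) ≠ 0) :
    ∀ j ≤ m,
      ((List.finRange j).map fun a => Hrefl Ω u a).prod =
        1 - Umat u j * Tmat Ω u j * utR ((Ω * Umat u j)ᵀ * Ω) :=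
  trim_rhqr_compact_general m Ω u hu0
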